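/- arXiv:cs/0605023 — 4 statements merged into one kernel-verified Lean document; each statement's English description precedes it below -/
import Mathlib

section
/- The function φ(ξ) = (1/2)·log(2πe·(σ₂² + (1/(2πe))·2^(2ξ))) − ξ is non-increasing in ξ ∈ ℝ for any fixed σ₂² > 0. -/
theorem phi_antitone (σ2 : ℝ) (h2 : 0 < σ2) :
    Antitone (fun ξ : ℝ =>
      (1/2) * Real.logb 2 (2 * Real.pi * Real.exp 1 *
        (σ2 + (1 / (2 * Real.pi * Real.exp 1)) * (2 : ℝ) ^ (2 * ξ))) - ξ) := by
  intro x y hxy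
  simp only
  set c : ℝ := 2 * Real.pi * Real.exp 1 with hc
  have hcpos : 0 < c := by positivity
  set t : ℝ := (2:ℝ) ^ (2*x) with htdef
  set t' : ℝ := (2:ℝ) ^ (2*y) with htdef'
  have ht : 0 < t := Real.rpow_pos_of_pos (by norm_num) _
  have ht' : 0 < t' := Real.rpow_pos_of_pos (by norm_num) _
  have htt' : t ≤ t' := by
    apply Real.rpow_le_rpow_left_iff (by norm_num : (1:ℝ) < 2) |>.mpr
    linarith
  have e1 : c * (σ2 + 1/c * t) = c*σ2 + t := by field_simp
  have e2 : c * (σ2 + 1/c * t') = c*σ2 + t' := by field_simp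
  rw [e1, e2]
  have hlx : Real.logb 2 t = 2*x := Real.logb_rpow (by norm_num) (by norm_num)
  have hly : Real.logb 2 t' = 2*y := Real.logb_rpow (by norm_num) (by norm_num)
  have ha : 0 < c*σ2 := by positivity
  have key : Real.logb 2 ((c*σ2 + t') * t) ≤ Real.logb 2 ((c*σ2 + t) * t') := by
    apply (Real.logb_le_logb (by norm_num : (1:ℝ) < 2) (by positivity) (by positivity)).mpr
    nlinarith
  rw [Real.logb_mul (by positivity) ht.ne', Real.logb_mul (by positivity) ht'.ne'] at key
  linarith
end

section
/- Let σ₁², σ₂² > 0 and P > 0, with C(ξ) = (1/2)·log(1+ξ). Then C(P/σ₁²) − C(P/(σ₁²+σ₂²)) < C(σ₂²/σ₁²), and the difference C(P/σ₁²) − C(P/(σ₁²+σ₂²)) tends to C(σ₂²/σ₁²) as P → ∞. -/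
noncomputable def C (ξ : ℝ) : ℝ := (1/2) * Real.log (1 + ξ)

theorem secrecy_sum_capacity_bound (σ1 σ2 : ℝ) (h1 : 0 < σ1) (h2 : 0 < σ2) :
    (∀ P : ℝ, 0 < P → C (P / σ1) - C (P / (σ1 + σ2)) < C (σ2 / σ1)) ∧
    Filter.Tendsto (fun P : ℝ => C (P / σ1) - C (P / (σ1 + σ2)))
      Filter.atTop (nhds (C (σ2 / σ1))) := by
  have h12 : 0 < σ1 + σ2 := by linarith
  have key : ∀ P : ℝ, 0 < P →
      C (P / σ1) - C (P / (σ1 + σ2)) =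
        C (σ2 / σ1) + (1/2) * (Real.log (σ1 + P) - Real.log (σ1 + σ2 + P)) := by
    intro P hP
    have e1 : (1 : ℝ) + P / σ1 = (σ1 + P) / σ1 := by field_simp
    have e2 : (1 : ℝ) + P / (σ1 + σ2) = (σ1 + σ2 + P) / (σ1 + σ2) := by field_simp
    have e3 : (1 : ℝ) + σ2 / σ1 = (σ1 + σ2) / σ1 := by field_simp
    simp only [C, e1, e2, e3]
    rw [Real.log_div (by positivity) h1.ne', Real.log_div (by positivity) h12.ne',
      Real.log_div h12.ne' h1.ne']
    ring
  constructor
  · intro P hP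
    rw [key P hP]
    have : Real.log (σ1 + P) < Real.log (σ1 + σ2 + P) :=
      Real.log_lt_log (by linarith) (by linarith)
    nlinarith
  · have hev : (fun P : ℝ => C (P / σ1) - C (P / (σ1 + σ2))) =ᶠ[Filter.atTop]
        fun P => C (σ2 / σ1) + (1/2) * (Real.log (σ1 + P) - Real.log (σ1 + σ2 + P)) := by
      filter_upwards [Filter.eventually_gt_atTop 0] with P hP using key P hP
    rw [Filter.tendsto_congr' hev]
    have hden : Filter.Tendsto (fun P : ℝ => σ1 + σ2 + P) Filter.atTop Filter.atTop :=
      Filter.tendsto_atTop_add_const_left _ _ Filter.tendsto_id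
    have hratio : Filter.Tendsto (fun P : ℝ => (σ1 + P) / (σ1 + σ2 + P))
        Filter.atTop (nhds 1) := by
      have h0 : Filter.Tendsto (fun P : ℝ => σ2 / (σ1 + σ2 + P)) Filter.atTop (nhds 0) :=
        Filter.Tendsto.div_atTop tendsto_const_nhds hden
      have : Filter.Tendsto (fun P : ℝ => 1 - σ2 / (σ1 + σ2 + P)) Filter.atTop (nhds (1 - 0)) :=
        tendsto_const_nhds.sub h0
      rw [sub_zero] at this
      refine this.congr' ?_
      filter_upwards [Filter.eventually_gt_atTop 0] with P hP
      have : (σ1 + σ2 + P) ≠ 0 := by positivity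
      field_simp
      ring
    have hlog : Filter.Tendsto (fun P : ℝ => Real.log (σ1 + P) - Real.log (σ1 + σ2 + P))
        Filter.atTop (nhds 0) := by
      have hcont : Filter.Tendsto (fun P : ℝ => Real.log ((σ1 + P) / (σ1 + σ2 + P)))
          Filter.atTop (nhds (Real.log 1)) :=
        (Real.continuousAt_log one_ne_zero).tendsto.comp hratio
      rw [Real.log_one] at hcont
      refine hcont.congr' ?_
      filter_upwards [Filter.eventually_gt_atTop 0] with P hP
      rw [Real.log_div (by positivity) (by positivity)]
    have := (tendsto_const_nhds (x := C (σ2 / σ1)) (f := Filter.atTop (α := ℝ))).add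
      (hlog.const_mul (1/2 : ℝ))
    simpa using this
end

section
/- Let P₁, P₂, σ₁², σ₂² > 0 and C(ξ) = (1/2)·log(1+ξ). Then the perfect-secrecy single-user bounds satisfy superadditivity under interference: [C(P₁/σ₁²) − C(P₁/(P₂+σ₁²+σ₂²))] + [C(P₂/σ₁²) − C(P₂/(P₁+σ₁²+σ₂²))] ≥ C((P₁+P₂)/σ₁²) − C((P₁+P₂)/(σ₁²+σ₂²)). -/
lemma Cdiff (u v : ℝ) (hu : 0 < 1 + u) (hv : 0 < 1 + v) :
    C u - C v = (1/2) * Real.log ((1 + u) / (1 + v)) := by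
  rw [C, C, Real.log_div hu.ne' hv.ne']
  ring

theorem single_user_superadditive (P1 P2 σ1 σ2 : ℝ)
    (hP1 : 0 < P1) (hP2 : 0 < P2) (h1 : 0 < σ1) (h2 : 0 < σ2) :
    (C (P1 / σ1) - C (P1 / (P2 + σ1 + σ2))) + (C (P2 / σ1) - C (P2 / (P1 + σ1 + σ2)))
      ≥ C ((P1 + P2) / σ1) - C ((P1 + P2) / (σ1 + σ2)) := by
  have hA : 0 < 1 + P1 / σ1 := by positivity
  have hB : 0 < 1 + P1 / (P2 + σ1 + σ2) := by positivity
  have hC : 0 < 1 + P2 / σ1 := by positivity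
  have hD : 0 < 1 + P2 / (P1 + σ1 + σ2) := by positivity
  have hE : 0 < 1 + (P1 + P2) / σ1 := by positivity
  have hF : 0 < 1 + (P1 + P2) / (σ1 + σ2) := by positivity
  rw [Cdiff _ _ hA hB, Cdiff _ _ hC hD, Cdiff _ _ hE hF]
  have hR1 : 0 < (1 + P1 / σ1) / (1 + P1 / (P2 + σ1 + σ2)) := by positivity
  have hR2 : 0 < (1 + P2 / σ1) / (1 + P2 / (P1 + σ1 + σ2)) := by positivity
  have hR3 : 0 < (1 + (P1 + P2) / σ1) / (1 + (P1 + P2) / (σ1 + σ2)) := by positivity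
  rw [ge_iff_le, show (1:ℝ)/2 * Real.log ((1 + P1 / σ1) / (1 + P1 / (P2 + σ1 + σ2)))
      + 1/2 * Real.log ((1 + P2 / σ1) / (1 + P2 / (P1 + σ1 + σ2)))
      = 1/2 * Real.log (((1 + P1 / σ1) / (1 + P1 / (P2 + σ1 + σ2)))
        * ((1 + P2 / σ1) / (1 + P2 / (P1 + σ1 + σ2)))) by
        rw [Real.log_mul hR1.ne' hR2.ne']; ring]
  have hprod : (1 + (P1 + P2) / σ1) / (1 + (P1 + P2) / (σ1 + σ2))
      ≤ ((1 + P1 / σ1) / (1 + P1 / (P2 + σ1 + σ2)))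
        * ((1 + P2 / σ1) / (1 + P2 / (P1 + σ1 + σ2))) := by
    have n1 : (P2 + σ1 + σ2) ≠ 0 := by positivity
    have n2 : (P1 + σ1 + σ2) ≠ 0 := by positivity
    have n3 : (σ1 + σ2) ≠ 0 := by positivity
    have e1 : 1 + P1 / σ1 = (σ1 + P1) / σ1 := by field_simp
    have e2 : 1 + P2 / σ1 = (σ1 + P2) / σ1 := by field_simp
    have e3 : 1 + P1 / (P2 + σ1 + σ2) = (σ1 + σ2 + P1 + P2) / (P2 + σ1 + σ2) := by
      field_simp; ring
    have e4 : 1 + P2 / (P1 + σ1 + σ2) = (σ1 + σ2 + P1 + P2) / (P1 + σ1 + σ2) := by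
      field_simp; ring
    have e5 : 1 + (P1 + P2) / σ1 = (σ1 + P1 + P2) / σ1 := by field_simp; ring
    have e6 : 1 + (P1 + P2) / (σ1 + σ2) = (σ1 + σ2 + P1 + P2) / (σ1 + σ2) := by
      field_simp; ring
    rw [e1, e2, e3, e4, e5, e6, div_mul_div_comm, div_mul_div_comm, div_mul_div_comm, div_div_div_eq,
      div_div_div_eq, div_le_div_iff₀ (by positivity) (by positivity)]
    have excess : (σ1 + P1) * (σ1 + P2) * ((P2 + σ1 + σ2) * (P1 + σ1 + σ2))
          * (σ1 * (σ1 + σ2 + P1 + P2))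
        - (σ1 + P1 + P2) * (σ1 + σ2) * (σ1 * σ1 * ((σ1 + σ2 + P1 + P2) * (σ1 + σ2 + P1 + P2)))
        = σ1 * (σ1 + σ2 + P1 + P2) * (P1 * P2)
          * (σ1 * (σ1 + P1 + P2) + (σ1 + σ2) * (σ1 + σ2 + P1 + P2) + P1 * P2) := by ring
    nlinarith [excess, mul_pos (mul_pos (mul_pos h1 (by positivity : (0:ℝ) < σ1 + σ2 + P1 + P2))
      (mul_pos hP1 hP2)) (by positivity : (0:ℝ) < σ1 * (σ1 + P1 + P2)
        + (σ1 + σ2) * (σ1 + σ2 + P1 + P2) + P1 * P2)]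
  exact mul_le_mul_of_nonneg_left (Real.log_le_log hR3 hprod) (by norm_num)
end

section
/- Let P₁, P₂, σ₁², σ₂² > 0, δ ∈ (0,1], and C(ξ) = (1/2)·log(1+ξ). For α ∈ (0,1), define the TDMA rate point R_k(α_k) = min{α_k·C(P_k/(α_k σ₁²)), (α_k/δ)·[C(P_k/(α_k σ₁²)) − C(P_k/(α_k(σ₁²+σ₂²)))]} with α₁ = α, α₂ = 1−α. Then for every α ∈ (0,1), R₁(α) + R₂(α) ≤ min{C((P₁+P₂)/σ₁²), (1/δ)·[C((P₁+P₂)/σ₁²) − C((P₁+P₂)/(σ₁²+σ₂²))]}. -/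
noncomputable def Rtdma (δ P σ1 σ2 α : ℝ) : ℝ :=
  min (α * C (P / (α * σ1)))
    ((α / δ) * (C (P / (α * σ1)) - C (P / (α * (σ1 + σ2)))))

open Set

lemma ConcaveOn.log {E : Type*} [AddCommMonoid E] [Module ℝ E] {s : Set E} {f : E → ℝ}
    (hf : ConcaveOn ℝ s f) (hpos : ∀ x ∈ s, 0 < f x) :
    ConcaveOn ℝ s fun x => Real.log (f x) := by
  refine ⟨hf.1, fun x hx y hy a b ha hb hab => ?_⟩
  have hx' := hpos x hx
  have hy' := hpos y hy
  calc a • Real.log (f x) + b • Real.log (f y)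
      ≤ Real.log (a • f x + b • f y) := strictConcaveOn_log_Ioi.concaveOn.2 hx' hy' ha hb hab
    _ ≤ Real.log (f (a • x + b • y)) :=
        Real.log_le_log (convex_Ioi (0 : ℝ) hx' hy' ha hb hab) (hf.2 hx hy ha hb hab)

lemma concaveOn_add_div_add {a b : ℝ} (hab : a ≤ b) :
    ConcaveOn ℝ (Ioi (-b)) fun t => (a + t) / (b + t) := by
  have hinv : ConvexOn ℝ (Ioi (-b)) fun t => (b + t)⁻¹ := by
    have h := (convexOn_zpow (𝕜 := ℝ) (-1)).translate_left b
    have hset : (fun z => b + z) ⁻¹' Ioi (0 : ℝ) = Ioi (-b) := by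
      ext t; simp [neg_lt_iff_pos_add']
    rw [hset] at h
    exact h.congr fun t _ => by simp [add_comm]
  refine ((hinv.smul (sub_nonneg.2 hab)).neg.add_const 1).congr fun t ht => ?_
  have : b + t ≠ 0 := (neg_lt_iff_pos_add'.1 ht).ne'
  simp only [Pi.add_apply, Pi.neg_apply, smul_eq_mul]
  field_simp
  ring

/- Time sharing: a user active for a fraction `α` of the time with power `x / α`, the other
for `1 - α` with power `y / (1 - α)`, does no better than both transmitting jointly. -/
lemma ConcaveOn.mul_apply_div_add_le {f : ℝ → ℝ} (hf : ConcaveOn ℝ (Ici 0) f) {α x y : ℝ}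
    (hα : α ∈ Ioo 0 1) (hx : 0 ≤ x) (hy : 0 ≤ y) :
    α * f (x / α) + (1 - α) * f (y / (1 - α)) ≤ f (x + y) := by
  obtain ⟨hα0, hα1⟩ := hα
  have hβ : 0 < 1 - α := sub_pos.2 hα1
  have h := hf.2 (mem_Ici.2 (div_nonneg hx hα0.le)) (mem_Ici.2 (div_nonneg hy hβ.le))
    hα0.le hβ.le (add_sub_cancel α 1)
  simp only [smul_eq_mul, mul_div_cancel₀ x hα0.ne', mul_div_cancel₀ y hβ.ne'] at h
  exact h

lemma concaveOn_C_div {a : ℝ} (ha : 0 < a) : ConcaveOn ℝ (Ici 0) fun t => C (t / a) := by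
  have hlin : ConcaveOn ℝ (Ici 0) fun t : ℝ => a⁻¹ * t + 1 :=
    ((concaveOn_id (convex_Ici (0 : ℝ))).smul (inv_nonneg.2 ha.le)).add_const 1
  refine ((hlin.log fun t (ht : 0 ≤ t) => by positivity).smul
    (by norm_num : (0 : ℝ) ≤ 1 / 2)).congr fun t _ => ?_
  simp only [C, smul_eq_mul, div_eq_inv_mul, add_comm]

lemma concaveOn_C_div_sub_C_div {a b : ℝ} (ha : 0 < a) (hab : a ≤ b) :
    ConcaveOn ℝ (Ici 0) fun t => C (t / a) - C (t / b) := by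
  have hb : 0 < b := ha.trans_le hab
  have hratio : ConcaveOn ℝ (Ici 0) fun t => b / a * ((a + t) / (b + t)) :=
    ((concaveOn_add_div_add hab).subset (Ici_subset_Ioi.2 (by linarith)) (convex_Ici 0)).smul
      (by positivity)
  refine ((hratio.log fun t (ht : 0 ≤ t) => by positivity).smul
    (by norm_num : (0 : ℝ) ≤ 1 / 2)).congr fun t (ht : 0 ≤ t) => ?_
  simp only [C, smul_eq_mul]
  rw [← mul_sub, ← Real.log_div (by positivity) (by positivity)]
  congr 2
  field_simp

theorem tdma_in_outer_bound (P1 P2 σ1 σ2 δ : ℝ)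
    (hP1 : 0 < P1) (hP2 : 0 < P2) (h1 : 0 < σ1) (h2 : 0 < σ2)
    (hδ : δ ∈ Set.Ioc (0:ℝ) 1) :
    ∀ α : ℝ, α ∈ Set.Ioo (0:ℝ) 1 →
      Rtdma δ P1 σ1 σ2 α + Rtdma δ P2 σ1 σ2 (1 - α) ≤
        min (C ((P1 + P2) / σ1))
          ((1 / δ) * (C ((P1 + P2) / σ1) - C ((P1 + P2) / (σ1 + σ2)))) := by
  intro α hα
  simp only [Rtdma, ← div_div]
  refine le_min ?_ ?_
  · calc _ ≤ α * C (P1 / α / σ1) + (1 - α) * C (P2 / (1 - α) / σ1) :=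
          add_le_add (min_le_left _ _) (min_le_left _ _)
      _ ≤ C ((P1 + P2) / σ1) :=
          (concaveOn_C_div h1).mul_apply_div_add_le hα hP1.le hP2.le
  · have hσ : σ1 ≤ σ1 + σ2 := le_add_of_nonneg_right h2.le
    have hsecrecy := (concaveOn_C_div_sub_C_div h1 hσ).mul_apply_div_add_le hα hP1.le hP2.le
    calc _ ≤ α / δ * (C (P1 / α / σ1) - C (P1 / α / (σ1 + σ2))) +
            (1 - α) / δ * (C (P2 / (1 - α) / σ1) - C (P2 / (1 - α) / (σ1 + σ2))) :=
          add_le_add (min_le_right _ _) (min_le_right _ _)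
      _ = 1 / δ * (α * (C (P1 / α / σ1) - C (P1 / α / (σ1 + σ2))) +
            (1 - α) * (C (P2 / (1 - α) / σ1) - C (P2 / (1 - α) / (σ1 + σ2)))) := by ring
      _ ≤ _ := mul_le_mul_of_nonneg_left hsecrecy (one_div_nonneg.2 hδ.1.le)
end
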